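/- Let H be an r-uniform hypergraph and let u_1, f_1, u_2, f_2, ..., f_l, u_{l+1} be a Berge-path of length l in H. Suppose that for some index i with 1 ≤ i ≤ l−1 there exist two distinct hyperedges h_1, h_2 of H, neither belonging to {f_1, ..., f_l}, such that u_1, u_{i+2} ∈ h_1 and u_{l+1}, u_i ∈ h_2. Then H contains a Berge-cycle of length l (with vertex set {u_1, ..., u_i} ∪ {u_{i+2}, ..., u_{l+1}}). -/

import Mathlib

open scoped Classical

/-- A Berge-path of length `t` in the hypergraph `H` (a family of hyperedges):
an alternating sequence of `t+1` distinct vertices and `t` distinct hyperedges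
`v₁, e₁, …, e_t, v_{t+1}` with `vᵢ, vᵢ₊₁ ∈ eᵢ`. -/
structure BergePath {V : Type*} (H : Finset (Finset V)) (t : ℕ) where
  verts : Fin (t + 1) → V
  edges : Fin t → Finset V
  verts_inj : Function.Injective verts
  edges_inj : Function.Injective edges
  edges_mem : ∀ i, edges i ∈ H
  fst_mem : ∀ i : Fin t, verts i.castSucc ∈ edges i
  snd_mem : ∀ i : Fin t, verts i.succ ∈ edges i

/-- A Berge-cycle of length `t` in the hypergraph `H`: `t` distinct vertices and
`t` distinct hyperedges with `vᵢ, vᵢ₊₁ ∈ eᵢ`, indices mod `t`. -/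
structure BergeCycle {V : Type*} (H : Finset (Finset V)) (t : ℕ) where
  verts : Fin t → V
  edges : Fin t → Finset V
  verts_inj : Function.Injective verts
  edges_inj : Function.Injective edges
  edges_mem : ∀ i, edges i ∈ H
  fst_mem : ∀ i, verts i ∈ edges i
  snd_mem : ∀ i : Fin t, verts ⟨(i.val + 1) % t, Nat.mod_lt _ i.pos⟩ ∈ edges i

/-- `u` and `v` are joined by a Berge-path of `H`. -/
def BergeReachable {V : Type*} (H : Finset (Finset V)) (u v : V) : Prop :=
  ∃ t, ∃ P : BergePath H t, P.verts 0 = u ∧ P.verts (Fin.last t) = v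

/-- A hypergraph on the vertex type `V` is connected if any two vertices are joined
by a Berge-path. -/
def HConnected {V : Type*} (H : Finset (Finset V)) : Prop :=
  ∀ u v : V, u ≠ v → BergeReachable H u v

/-- The degree of a vertex: the number of hyperedges containing it. -/
noncomputable def hdeg {V : Type*} (H : Finset (Finset V)) (v : V) : ℕ :=
  (H.filter (fun e => v ∈ e)).card

/-- The vertex neighborhood of `v` in `H`. -/
noncomputable def nbhd {V : Type*} [Fintype V] (H : Finset (Finset V)) (v : V) : Finset V :=
  Finset.univ.filter (fun u => u ≠ v ∧ ∃ e ∈ H, v ∈ e ∧ u ∈ e)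

/-- The sub-hypergraph induced by a set `S` of vertices: all hyperedges lying inside `S`. -/
noncomputable def restrictTo {V : Type*} (H : Finset (Finset V)) (S : Finset V) :
    Finset (Finset V) :=
  H.filter (fun e => e ⊆ S)

/-- `DelProcess H D S T` : starting from the vertex set `S`, the vertex set `T` can be
reached by repeatedly deleting a vertex whose degree in the current induced
sub-hypergraph is less than `D` (together with all hyperedges containing it). -/
inductive DelProcess {V : Type*} (H : Finset (Finset V)) (D : ℕ) :
    Finset V → Finset V → Prop
  | refl (S : Finset V) : DelProcess H D S S
  | step (S T : Finset V) (v : V) (hv : v ∈ S)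
      (hd : hdeg (restrictTo H S) v < D)
      (h : DelProcess H D (S.erase v) T) : DelProcess H D S T

/-- The edge family of `H_{n,k}` for odd `k`, on vertex set `S` with kernel `A`:
all `r`-subsets of `S` having at most one vertex outside `A`. -/
noncomputable def HnkFamilyOdd {V : Type*} (r : ℕ) (S A : Finset V) : Finset (Finset V) :=
  S.powerset.filter (fun s => s.card = r ∧ (s \ A).card ≤ 1)

/-- The edge family of `H_{n,k}` for even `k`: additionally all `r`-subsets consisting of
`b1`, `b2` and `r-2` vertices of `A`. -/
noncomputable def HnkFamilyEven {V : Type*} (r : ℕ) (S A : Finset V) (b1 b2 : V) :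
    Finset (Finset V) :=
  S.powerset.filter (fun s => s.card = r ∧ ((s \ A).card ≤ 1 ∨ s \ A = {b1, b2}))

/-- `H` is (a copy of) the extremal hypergraph `H_{m,k}` on the vertex set `S`
(where `m = |S|`). Note that `⌊(k-1)/2⌋` equals `(k-1)/2` in ℕ for odd `k`,
and `(k-2)/2` for even `k`. -/
def IsHnkOn {V : Type*} (r k : ℕ) (S : Finset V) (H : Finset (Finset V)) : Prop :=
  ∃ A ⊆ S, A.card = (k - 1) / 2 ∧
    ((Odd k ∧ H = HnkFamilyOdd r S A) ∨
     (Even k ∧ ∃ b1 ∈ S \ A, ∃ b2 ∈ S \ A, b1 ≠ b2 ∧ H = HnkFamilyEven r S A b1 b2))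

/-- The extremal number of hyperedges:
`C(⌊(k-1)/2⌋, r-1)·(n − ⌊(k-1)/2⌋) + C(⌊(k-1)/2⌋, r) + [2 ∣ k]·C(⌊(k-1)/2⌋, r-2)`. -/
def extremalCount (r k n : ℕ) : ℕ :=
  ((k - 1) / 2).choose (r - 1) * (n - (k - 1) / 2) + ((k - 1) / 2).choose r +
    (if 2 ∣ k then ((k - 1) / 2).choose (r - 2) else 0)

/-- The threshold `N_{k,r}`. -/
def Nkr (r k : ℕ) : ℕ :=
  (r * (k - 1)).choose r + ((k - 1) / 2).choose (r - 1) * ((k - 1) / 2)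
    - ((k - 1) / 2).choose r - (if 2 ∣ k then ((k - 1) / 2).choose (r - 2) else 0)
    + r * (k - 1)

/-!
Follow the path from `u₁` to `u_i`, cross to `u_{l+1}` along `h₂`, follow the path backwards
down to `u_{i+2}` and return to `u₁` along `h₁`. This visits every vertex but `u_{i+1}`, and
uses the `l - 2` path edges other than `f_i, f_{i+1}` together with `h₁ ≠ h₂`, neither of which
lies on the path.
-/

theorem Fin.range_append {α : Type*} {m n : ℕ} (u : Fin m → α) (v : Fin n → α) :
    Set.range (Fin.append u v) = Set.range u ∪ Set.range v := by
  ext x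
  constructor
  · rintro ⟨j, rfl⟩
    induction j using Fin.addCases <;> simp
  · rintro (⟨j, rfl⟩ | ⟨j, rfl⟩)
    exacts [⟨Fin.castAdd n j, Fin.append_left u v j⟩, ⟨Fin.natAdd m j, Fin.append_right u v j⟩]

namespace BergePath

variable {V : Type*} {H : Finset (Finset V)} {t : ℕ}

def segment (P : BergePath H t) (s n : ℕ) (h : s + n ≤ t) : BergePath H n where
  verts j := P.verts ⟨s + j, by omega⟩
  edges j := P.edges ⟨s + j, by omega⟩
  verts_inj a b hab := Fin.ext (by simpa using P.verts_inj hab)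
  edges_inj a b hab := Fin.ext (by simpa using P.edges_inj hab)
  edges_mem _ := P.edges_mem _
  fst_mem j := P.fst_mem ⟨s + j, by omega⟩
  snd_mem j := P.snd_mem ⟨s + j, by omega⟩

@[simp]
theorem segment_verts (P : BergePath H t) (s n : ℕ) (h : s + n ≤ t) (j : Fin (n + 1)) :
    (P.segment s n h).verts j = P.verts ⟨s + j, by omega⟩ :=
  rfl

theorem range_segment_verts (P : BergePath H t) (s n : ℕ) (h : s + n ≤ t) :
    Set.range (P.segment s n h).verts = P.verts '' {j | s ≤ j.val ∧ j.val ≤ s + n} := by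
  ext x
  constructor
  · rintro ⟨j, rfl⟩
    exact ⟨_, ⟨Nat.le_add_right s j, by have := j.isLt; simp only; omega⟩, rfl⟩
  · rintro ⟨j, ⟨hsj, hjn⟩, rfl⟩
    exact ⟨⟨j - s, by omega⟩, congrArg P.verts (Fin.ext (by simp only; omega))⟩

theorem disjoint_range_segment_verts (P : BergePath H t) {s n s' n' : ℕ} (h : s + n ≤ t)
    (h' : s' + n' ≤ t) (hss' : s + n < s') :
    Disjoint (Set.range (P.segment s n h).verts) (Set.range (P.segment s' n' h').verts) := by
  rw [range_segment_verts, range_segment_verts, Set.disjoint_image_iff P.verts_inj]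
  exact Set.disjoint_left.2 fun j hj hj' => by simp only [Set.mem_ofPred_eq] at hj hj'; omega

theorem disjoint_range_segment_edges (P : BergePath H t) {s n s' n' : ℕ} (h : s + n ≤ t)
    (h' : s' + n' ≤ t) (hss' : s + n ≤ s') :
    Disjoint (Set.range (P.segment s n h).edges) (Set.range (P.segment s' n' h').edges) := by
  refine Set.disjoint_left.2 ?_
  rintro _ ⟨j, rfl⟩ ⟨j', hj'⟩
  have := congrArg Fin.val (P.edges_inj hj')
  simp only at this
  omega

theorem range_verts_diff_singleton (P : BergePath H t) {k m : ℕ} (ht : k + 2 + m = t) :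
    Set.range P.verts \ {P.verts ⟨k + 1, by omega⟩} =
      Set.range (P.segment 0 k (by omega)).verts ∪ Set.range (P.segment (k + 2) m ht.le).verts := by
  rw [range_segment_verts, range_segment_verts, ← Set.image_union, ← Set.image_univ,
    ← Set.image_singleton, ← Set.image_sdiff P.verts_inj]
  congr 1
  ext j
  simp only [zero_le, zero_add, true_and, Set.mem_union, Set.mem_ofPred_eq, Set.mem_sdiff,
    Set.mem_univ, Set.mem_singleton_iff, Fin.ext_iff]
  omega

theorem notMem_range_segment_edges (P : BergePath H t) {e : Finset V}
    (he : e ∉ Set.range P.edges) (s n : ℕ) (h : s + n ≤ t) :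
    e ∉ Set.range (P.segment s n h).edges :=
  fun ⟨_, hj⟩ => he ⟨_, hj⟩

def reverse (P : BergePath H t) : BergePath H t where
  verts := P.verts ∘ Fin.rev
  edges := P.edges ∘ Fin.rev
  verts_inj := P.verts_inj.comp Fin.rev_injective
  edges_inj := P.edges_inj.comp Fin.rev_injective
  edges_mem _ := P.edges_mem _
  fst_mem j := by simpa [Fin.rev_castSucc] using P.snd_mem j.rev
  snd_mem j := by simpa [Fin.rev_succ] using P.fst_mem j.rev

@[simp]
theorem reverse_verts (P : BergePath H t) (j : Fin (t + 1)) : P.reverse.verts j = P.verts j.rev :=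
  rfl

theorem range_reverse_verts (P : BergePath H t) :
    Set.range P.reverse.verts = Set.range P.verts :=
  Fin.rev_surjective.range_comp _

theorem range_reverse_edges (P : BergePath H t) :
    Set.range P.reverse.edges = Set.range P.edges :=
  Fin.rev_surjective.range_comp _

section append

variable {a b : ℕ} (P : BergePath H a) (Q : BergePath H b) (e : Finset V) (he : e ∈ H)
  (hPe : P.verts (Fin.last a) ∈ e) (hQe : Q.verts 0 ∈ e)
  (hV : Disjoint (Set.range P.verts) (Set.range Q.verts))
  (hE : Disjoint (insert e (Set.range P.edges)) (Set.range Q.edges))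
  (heP : e ∉ Set.range P.edges)

def append : BergePath H (a + 1 + b) where
  verts := Fin.append (m := a + 1) (n := b + 1) P.verts Q.verts
  edges := Fin.append (Fin.snoc P.edges e) Q.edges
  verts_inj := Fin.append_injective_iff.2
    ⟨P.verts_inj, Q.verts_inj, Set.disjoint_range_iff.1 hV⟩
  edges_inj := Fin.append_injective_iff.2
    ⟨Fin.snoc_injective_of_injective P.edges_inj heP, Q.edges_inj,
      Set.disjoint_range_iff.1 (by rwa [Fin.range_snoc])⟩
  edges_mem j := by
    induction j using Fin.addCases with
    | left j => induction j using Fin.lastCases <;> simp [he, P.edges_mem]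
    | right j => simp [Q.edges_mem]
  fst_mem j := by
    induction j using Fin.addCases with
    | left j =>
      induction j using Fin.lastCases with
      | last => simpa [Fin.castSucc_castAdd] using hPe
      | cast j => simpa [Fin.castSucc_castAdd] using P.fst_mem j
    | right j => simpa [Fin.castSucc_natAdd] using Q.fst_mem j
  snd_mem j := by
    induction j using Fin.addCases with
    | left j =>
      induction j using Fin.lastCases with
      | last =>
        rw [show (Fin.castAdd b (Fin.last a)).succ = Fin.natAdd (a + 1) (0 : Fin (b + 1)) from rfl]
        simpa using hQe
      | cast j =>
        rw [show (Fin.castAdd b j.castSucc).succ = Fin.castAdd (b + 1) j.succ from rfl]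
        simpa using P.snd_mem j
    | right j => simpa [Fin.succ_natAdd] using Q.snd_mem j

theorem range_append_verts :
    Set.range (P.append Q e he hPe hQe hV hE heP).verts =
      Set.range P.verts ∪ Set.range Q.verts :=
  Fin.range_append P.verts Q.verts

theorem range_append_edges :
    Set.range (P.append Q e he hPe hQe hV hE heP).edges =
      insert e (Set.range P.edges) ∪ Set.range Q.edges := by
  rw [append, Fin.range_append, Fin.range_snoc]

theorem append_verts_zero : (P.append Q e he hPe hQe hV hE heP).verts 0 = P.verts 0 :=
  Fin.append_left P.verts Q.verts 0

theorem append_verts_last :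
    (P.append Q e he hPe hQe hV hE heP).verts (Fin.last _) = Q.verts (Fin.last b) :=
  Fin.append_right P.verts Q.verts (Fin.last b)

end append

def close (P : BergePath H t) (f : Finset V) (hf : f ∈ H) (hfP : f ∉ Set.range P.edges)
    (hlast : P.verts (Fin.last t) ∈ f) (hfirst : P.verts 0 ∈ f) : BergeCycle H (t + 1) where
  verts := P.verts
  edges := Fin.snoc P.edges f
  verts_inj := P.verts_inj
  edges_inj := Fin.snoc_injective_of_injective P.edges_inj hfP
  edges_mem j := by induction j using Fin.lastCases <;> simp [hf, P.edges_mem]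
  fst_mem j := by induction j using Fin.lastCases <;> simp [hlast, P.fst_mem]
  snd_mem j := by
    induction j using Fin.lastCases with
    | last => simpa using hfirst
    | cast j =>
      rw [Fin.snoc_castSucc]
      convert P.snd_mem j using 2
      ext
      simp [Nat.mod_eq_of_lt]

theorem range_close_verts (P : BergePath H t) (f : Finset V) (hf : f ∈ H)
    (hfP : f ∉ Set.range P.edges) (hlast : P.verts (Fin.last t) ∈ f) (hfirst : P.verts 0 ∈ f) :
    Set.range (P.close f hf hfP hlast hfirst).verts = Set.range P.verts :=
  rfl

end BergePath

/-- Vertices are 1-indexed in the informal statement; here `P.verts ⟨j-1, _⟩` is `u_j`. -/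
theorem berge_cycle_from_crossing_edges
    {V : Type*} (l : ℕ) (H : Finset (Finset V))
    (P : BergePath H l) (i : ℕ) (hi1 : 1 ≤ i) (hi2 : i ≤ l - 1)
    (h1 h2 : Finset V) (hh1 : h1 ∈ H) (hh2 : h2 ∈ H) (hne : h1 ≠ h2)
    (hf1 : ∀ j, h1 ≠ P.edges j) (hf2 : ∀ j, h2 ≠ P.edges j)
    (hu1 : P.verts 0 ∈ h1) (hui2 : P.verts ⟨i + 1, by omega⟩ ∈ h1)
    (hul : P.verts (Fin.last l) ∈ h2) (hui : P.verts ⟨i - 1, by omega⟩ ∈ h2) :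
    ∃ C : BergeCycle H l,
      Set.range C.verts = Set.range P.verts \ {P.verts ⟨i, by omega⟩} := by
  obtain ⟨k, rfl⟩ : ∃ k, i = k + 1 := ⟨i - 1, by omega⟩
  obtain ⟨m, rfl⟩ : ∃ m, l = k + 1 + m + 1 := ⟨l - k - 2, by omega⟩
  have hh1P : h1 ∉ Set.range P.edges := fun ⟨j, hj⟩ => hf1 j hj.symm
  have hh2P : h2 ∉ Set.range P.edges := fun ⟨j, hj⟩ => hf2 j hj.symm
  -- `A = u₁ … u_i` and `B = u_{l+1} … u_{i+2}`
  let A := P.segment 0 k (by omega)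
  let B := (P.segment (k + 2) m (by omega)).reverse
  have hA : A.verts (Fin.last k) ∈ h2 := by simpa [A] using hui
  have hB : B.verts 0 ∈ h2 := by
    simp only [B, BergePath.reverse_verts, BergePath.segment_verts, Fin.rev_zero]
    convert hul using 2
    ext
    simp only [Fin.val_last]
    omega
  have hAB : Disjoint (Set.range A.verts) (Set.range B.verts) := by
    rw [BergePath.range_reverse_verts]
    exact P.disjoint_range_segment_verts _ _ (by omega)
  have hABe : Disjoint (insert h2 (Set.range A.edges)) (Set.range B.edges) := by
    rw [BergePath.range_reverse_edges, Set.disjoint_insert_left]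
    exact ⟨P.notMem_range_segment_edges hh2P _ _ _,
      P.disjoint_range_segment_edges _ _ (by omega)⟩
  let R := A.append B h2 hh2 hA hB hAB hABe (P.notMem_range_segment_edges hh2P _ _ _)
  have hh1R : h1 ∉ Set.range R.edges := by
    simp only [R, B, BergePath.range_append_edges, BergePath.range_reverse_edges, Set.mem_union,
      Set.mem_insert_iff, not_or]
    exact ⟨⟨hne, P.notMem_range_segment_edges hh1P _ _ _⟩,
      P.notMem_range_segment_edges hh1P _ _ _⟩
  refine ⟨R.close h1 hh1 hh1R ?_ ?_, ?_⟩
  · simpa [R, B, BergePath.append_verts_last] using hui2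
  · simpa [R, A, BergePath.append_verts_zero] using hu1
  · rw [BergePath.range_close_verts, BergePath.range_append_verts,
      BergePath.range_reverse_verts, P.range_verts_diff_singleton (k := k) (m := m) (by omega)]
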